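/- arXiv:2303.02317 — 5 statements merged into one kernel-verified Lean document; each statement's English description precedes it below -/
import Mathlib

section
/- In the American call binomial grid, if a cell (i,j) is green (its value equals the exercise value) then the cell (i, j+1) to its right is also green. -/
/-- Right-of-green-is-green: in the American call binomial grid, if a cell `(i,j)`
is green then the cell `(i,j+1)` to its right is also green. -/
theorem stmt_3 (S K V Δt R Y : ℝ) (T : ℕ)
    (hS : 0 < S) (hK : 0 < K) (hV : 0 < V) (hΔt : 0 < Δt) (hR : 0 ≤ R) (hY : 0 ≤ Y)
    (u m p s0 s1 : ℝ)
    (hu : u = Real.exp (V * Real.sqrt Δt))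
    (hm : m = Real.exp (-R * Δt))
    (hp : p = (Real.exp ((R - Y) * Δt) - 1 / u) / (u - 1 / u))
    (hp0 : 0 ≤ p) (hp1 : p ≤ 1)
    (hs0 : s0 = m * (1 - p)) (hs1 : s1 = m * p)
    (G Gred Ggreen : ℕ → ℤ → ℝ)
    (hGgreen : ∀ (i : ℕ) (j : ℤ), Ggreen i j = S * u ^ (2 * j - (i : ℤ)) - K)
    (hGredT : ∀ j : ℤ, Gred T j = 0)
    (hGred : ∀ (i : ℕ) (j : ℤ), i < T → Gred i j = s0 * G (i + 1) j + s1 * G (i + 1) (j + 1))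
    (hG : ∀ (i : ℕ) (j : ℤ), G i j = max (Gred i j) (Ggreen i j))
    (i : ℕ) (j : ℤ) (hiT : i ≤ T) (hj0 : 0 ≤ j) (hji : j ≤ (i : ℤ) - 1)
    (hgreen : G i j = Ggreen i j) :
    G i (j + 1) = Ggreen i (j + 1) := by
  have hu1 : 1 < u := by
    rw [hu]
    have : 0 < V * Real.sqrt Δt := mul_pos hV (Real.sqrt_pos.mpr hΔt)
    calc 1 = Real.exp 0 := by simp
    _ < _ := Real.exp_lt_exp.mpr this
  have hu0 : (0:ℝ) < u := by linarith
  have hm0 : (0:ℝ) < m := by rw [hm]; exact Real.exp_pos _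
  have hm1 : m ≤ 1 := by
    rw [hm]
    calc Real.exp (-R * Δt) ≤ Real.exp 0 := Real.exp_le_exp.mpr (by nlinarith)
    _ = 1 := Real.exp_zero
  have hs0' : 0 ≤ s0 := by rw [hs0]; nlinarith
  have hs1' : 0 ≤ s1 := by rw [hs1]; nlinarith
  have hsum : s0 + s1 ≤ 1 := by rw [hs0, hs1]; nlinarith
  have hu2 : (1:ℝ) ≤ u^2 := by nlinarith
  have husq : (0:ℝ) ≤ u^2 := by nlinarith
  have hc : 0 ≤ (u^2 - 1) * K := mul_nonneg (by linarith) hK.le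
  have hsc : s0 * ((u^2-1)*K) + s1 * ((u^2-1)*K) ≤ (u^2-1)*K := by nlinarith
  -- green recursion in j
  have hgg : ∀ (a : ℕ) (b : ℤ), Ggreen a (b+1) = u^2 * Ggreen a b + (u^2-1)*K := by
    intro a b
    rw [hGgreen, hGgreen]
    have h1 : 2*(b+1) - (a:ℤ) = (2*b - a) + 2 := by ring
    rw [h1, zpow_add₀ (ne_of_gt hu0), zpow_two, sq]
    ring
  -- key: G a (b+1) ≤ u^2 * G a b + (u^2-1)*K
  have key : ∀ d a, a + d = T → ∀ b : ℤ, G a (b+1) ≤ u^2 * G a b + (u^2-1)*K := by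
    intro d
    induction d with
    | zero =>
      intro a ha b
      have ha' : T = a := by omega
      rw [← ha'] at *
      rw [hG, hG, hGredT, hGredT, hgg]
      apply max_le
      · have h1 : (0:ℝ) ≤ max 0 (Ggreen T b) := le_max_left _ _
        have h2 : (0:ℝ) ≤ u^2 * max 0 (Ggreen T b) := mul_nonneg husq h1
        linarith
      · have h1 : Ggreen T b ≤ max 0 (Ggreen T b) := le_max_right _ _
        have h2 : u^2 * Ggreen T b ≤ u^2 * max 0 (Ggreen T b) :=
          mul_le_mul_of_nonneg_left h1 husq
        linarith
    | succ d ih =>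
      intro a ha b
      have haT : a < T := by omega
      have ih1 := ih (a+1) (by omega) b
      have ih2 := ih (a+1) (by omega) (b+1)
      rw [hG, hG]
      have hredstep : Gred a (b+1) ≤ u^2 * Gred a b + (u^2-1)*K := by
        rw [hGred a (b+1) haT, hGred a b haT]
        have e1 : s0 * G (a+1) (b+1) ≤ s0 * (u^2 * G (a+1) b + (u^2-1)*K) :=
          mul_le_mul_of_nonneg_left ih1 hs0'
        have e2 : s1 * G (a+1) (b+1+1) ≤ s1 * (u^2 * G (a+1) (b+1) + (u^2-1)*K) :=
          mul_le_mul_of_nonneg_left ih2 hs1'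
        have r1 : s0 * (u^2 * G (a+1) b + (u^2-1)*K)
            = u^2 * (s0 * G (a+1) b) + s0 * ((u^2-1)*K) := by ring
        have r2 : s1 * (u^2 * G (a+1) (b+1) + (u^2-1)*K)
            = u^2 * (s1 * G (a+1) (b+1)) + s1 * ((u^2-1)*K) := by ring
        have r3 : u^2 * (s0 * G (a+1) b + s1 * G (a+1) (b+1))
            = u^2 * (s0 * G (a+1) b) + u^2 * (s1 * G (a+1) (b+1)) := by ring
        linarith
      apply max_le
      · have h1 : Gred a b ≤ max (Gred a b) (Ggreen a b) := le_max_left _ _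
        have h2 : u^2 * Gred a b ≤ u^2 * max (Gred a b) (Ggreen a b) :=
          mul_le_mul_of_nonneg_left h1 husq
        linarith
      · rw [hgg]
        have h1 : Ggreen a b ≤ max (Gred a b) (Ggreen a b) := le_max_right _ _
        have h2 : u^2 * Ggreen a b ≤ u^2 * max (Gred a b) (Ggreen a b) :=
          mul_le_mul_of_nonneg_left h1 husq
        linarith
  -- Gred i j ≤ Ggreen i j
  have hge : Gred i j ≤ Ggreen i j := by
    calc Gred i j ≤ max (Gred i j) (Ggreen i j) := le_max_left _ _
    _ = G i j := (hG i j).symm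
    _ = Ggreen i j := hgreen
  -- main inequality at (i, j+1)
  have hle : Gred i (j+1) ≤ Ggreen i (j+1) := by
    rcases eq_or_lt_of_le hiT with hEq | hlt
    · subst hEq
      rw [hGredT] at hge ⊢
      rw [hgg]
      nlinarith
    · rw [hGred i (j+1) hlt, hgg]
      have ih1 := key (T - (i+1)) (i+1) (by omega) j
      have ih2 := key (T - (i+1)) (i+1) (by omega) (j+1)
      have e1 : s0 * G (i+1) (j+1) ≤ s0 * (u^2 * G (i+1) j + (u^2-1)*K) :=
        mul_le_mul_of_nonneg_left ih1 hs0'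
      have e2 : s1 * G (i+1) (j+1+1) ≤ s1 * (u^2 * G (i+1) (j+1) + (u^2-1)*K) :=
        mul_le_mul_of_nonneg_left ih2 hs1'
      have r1 : s0 * (u^2 * G (i+1) j + (u^2-1)*K)
          = u^2 * (s0 * G (i+1) j) + s0 * ((u^2-1)*K) := by ring
      have r2 : s1 * (u^2 * G (i+1) (j+1) + (u^2-1)*K)
          = u^2 * (s1 * G (i+1) (j+1)) + s1 * ((u^2-1)*K) := by ring
      have hred' : Gred i j = s0 * G (i+1) j + s1 * G (i+1) (j+1) := hGred i j hlt
      have h2 : u^2 * Gred i j ≤ u^2 * Ggreen i j := mul_le_mul_of_nonneg_left hge husq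
      have r3 : u^2 * (s0 * G (i+1) j + s1 * G (i+1) (j+1))
          = u^2 * (s0 * G (i+1) j) + u^2 * (s1 * G (i+1) (j+1)) := by ring
      rw [hred'] at h2
      linarith
  rw [hG, max_eq_right hle]
end

section
/- In the American call binomial grid, if cell (i,j) is green then j ≥ i/2 + (1/(2V√Δt))·(ln(K/S) + ln((1 - e^{-RΔt})/(1 - e^{-YΔt}))). -/
/-- If cell `(i,j)` of the American call binomial grid is green, then
`j ≥ i/2 + (1/(2V√Δt))·(ln(K/S) + ln((1 - e^{-RΔt})/(1 - e^{-YΔt})))`. -/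
theorem stmt_4 (S K V Δt R Y : ℝ) (T : ℕ)
    (hS : 0 < S) (hK : 0 < K) (hV : 0 < V) (hΔt : 0 < Δt) (hR : 0 < R) (hY : 0 < Y)
    (u m p s0 s1 : ℝ)
    (hu : u = Real.exp (V * Real.sqrt Δt))
    (hm : m = Real.exp (-R * Δt))
    (hp : p = (Real.exp ((R - Y) * Δt) - 1 / u) / (u - 1 / u))
    (hp0 : 0 ≤ p) (hp1 : p ≤ 1)
    (hs0 : s0 = m * (1 - p)) (hs1 : s1 = m * p)
    (G Gred Ggreen : ℕ → ℤ → ℝ)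
    (hGgreen : ∀ (i : ℕ) (j : ℤ), Ggreen i j = S * u ^ (2 * j - (i : ℤ)) - K)
    (hGredT : ∀ j : ℤ, Gred T j = 0)
    (hGred : ∀ (i : ℕ) (j : ℤ), i < T → Gred i j = s0 * G (i + 1) j + s1 * G (i + 1) (j + 1))
    (hG : ∀ (i : ℕ) (j : ℤ), G i j = max (Gred i j) (Ggreen i j))
    (i : ℕ) (j : ℤ) (hiT : i < T) (hj0 : 0 ≤ j) (hji : j ≤ (i : ℤ))
    (hgreen : G i j = Ggreen i j) (hstrict : Ggreen i j > Gred i j) :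
    (j : ℝ) ≥ (i : ℝ) / 2 + 1 / (2 * V * Real.sqrt Δt) *
      (Real.log (K / S) +
        Real.log ((1 - Real.exp (-R * Δt)) / (1 - Real.exp (-Y * Δt)))) := by
  have hsq : 0 < Real.sqrt Δt := Real.sqrt_pos.mpr hΔt
  have ha : 0 < V * Real.sqrt Δt := mul_pos hV hsq
  set a := V * Real.sqrt Δt with ha_def
  clear_value a
  have hu1 : 1 < u := by rw [hu]; exact Real.one_lt_exp_iff.mpr ha
  have hu0 : 0 < u := lt_trans one_pos hu1
  have hune : u ≠ 0 := hu0.ne'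
  have huinv : 1 / u < 1 := by
    rw [div_lt_one hu0]; exact hu1
  have hden : u - 1 / u ≠ 0 := by nlinarith
  have hm0 : 0 < m := by rw [hm]; exact Real.exp_pos _
  have hs0n : 0 ≤ s0 := by rw [hs0]; exact mul_nonneg hm0.le (by linarith)
  have hs1n : 0 ≤ s1 := by rw [hs1]; exact mul_nonneg hm0.le hp0
  set n : ℤ := 2 * j - (i : ℤ) with hn
  set x : ℝ := u ^ n with hxdef
  clear_value x
  clear_value n
  have hx : x = Real.exp ((n : ℝ) * a) := by
    rw [hxdef, hu, ← Real.rpow_intCast, Real.rpow_def_of_pos (Real.exp_pos a),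
      Real.log_exp, mul_comm]
  have hx0 : 0 < x := by rw [hx]; exact Real.exp_pos _
  -- lower bound on Gred i j
  have hmono0 : Ggreen (i+1) j ≤ G (i+1) j := by rw [hG]; exact le_max_right _ _
  have hmono1 : Ggreen (i+1) (j+1) ≤ G (i+1) (j+1) := by rw [hG]; exact le_max_right _ _
  have hlow : s0 * Ggreen (i+1) j + s1 * Ggreen (i+1) (j+1) ≤ Gred i j := by
    rw [hGred i j hiT]
    gcongr
  have e1 : u ^ (2 * j - ((i:ℕ)+1 : ℤ)) = x / u := by
    have : 2 * j - ((i:ℕ)+1 : ℤ) = n - 1 := by rw [hn]; ring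
    rw [this, zpow_sub_one₀ hune, ← hxdef, div_eq_mul_inv]
  have e2 : u ^ (2 * (j+1) - ((i:ℕ)+1 : ℤ)) = x * u := by
    have : 2 * (j+1) - ((i:ℕ)+1 : ℤ) = n + 1 := by rw [hn]; ring
    rw [this, zpow_add_one₀ hune, ← hxdef]
  have hEY : Real.exp (-R * Δt) * Real.exp ((R - Y) * Δt) = Real.exp (-Y * Δt) := by
    rw [← Real.exp_add]; ring_nf
  have hq : (-1 : ℝ) + u ^ 2 ≠ 0 := by nlinarith
  have hpu : (1 - p) / u + p * u = Real.exp ((R - Y) * Δt) := by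
    have hpE : p * (u - 1 / u) = Real.exp ((R - Y) * Δt) - 1 / u := by
      rw [hp, div_mul_cancel₀ _ hden]
    have hh : (1 - p) / u + p * u = 1 / u + p * (u - 1 / u) := by field_simp; ring
    rw [hh, hpE]; ring
  have hident : s0 * Ggreen (i+1) j + s1 * Ggreen (i+1) (j+1)
      = Real.exp (-Y * Δt) * (S * x) - Real.exp (-R * Δt) * K := by
    have step : s0 * Ggreen (i+1) j + s1 * Ggreen (i+1) (j+1)
        = m * (S * x * ((1 - p) / u + p * u)) - m * K := by
      rw [hGgreen, hGgreen]
      push_cast [e1, e2]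
      rw [hs0, hs1]
      field_simp
      ring
    rw [step, hpu, hm, ← hEY]; ring
  -- key inequality
  have hkey : K * (1 - Real.exp (-R * Δt)) < S * x * (1 - Real.exp (-Y * Δt)) := by
    have h1 : Ggreen i j = S * x - K := by rw [hGgreen, ← hn, ← hxdef]
    have h2 := hstrict
    rw [h1] at h2
    have h3 : Real.exp (-Y * Δt) * (S * x) - Real.exp (-R * Δt) * K < S * x - K := by
      calc Real.exp (-Y * Δt) * (S * x) - Real.exp (-R * Δt) * K
          = s0 * Ggreen (i+1) j + s1 * Ggreen (i+1) (j+1) := hident.symm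
        _ ≤ Gred i j := hlow
        _ < S * x - K := h2
    linarith [h3]
  have heR : Real.exp (-R * Δt) < 1 := by
    rw [Real.exp_lt_one_iff, neg_mul]; exact neg_neg_of_pos (mul_pos hR hΔt)
  have heY : Real.exp (-Y * Δt) < 1 := by
    rw [Real.exp_lt_one_iff, neg_mul]; exact neg_neg_of_pos (mul_pos hY hΔt)
  have h1R : 0 < 1 - Real.exp (-R * Δt) := by linarith
  have h1Y : 0 < 1 - Real.exp (-Y * Δt) := by linarith
  have hL : 0 < K * (1 - Real.exp (-R * Δt)) := mul_pos hK h1R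
  have hlog := Real.log_lt_log hL hkey
  rw [Real.log_mul hK.ne' h1R.ne', Real.log_mul (mul_pos hS hx0).ne' h1Y.ne',
    Real.log_mul hS.ne' hx0.ne'] at hlog
  have hlx : Real.log x = (n : ℝ) * a := by rw [hx, Real.log_exp]
  have hLdef : Real.log (K / S) + Real.log ((1 - Real.exp (-R * Δt)) / (1 - Real.exp (-Y * Δt)))
      < (n : ℝ) * a := by
    rw [Real.log_div hK.ne' hS.ne', Real.log_div h1R.ne' h1Y.ne']
    rw [hlx] at hlog
    linarith
  have hcast : ((n : ℤ) : ℝ) = 2 * (j : ℝ) - (i : ℝ) := by rw [hn]; push_cast; ring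
  rw [hcast] at hLdef
  have h2a : 2 * V * Real.sqrt Δt = 2 * a := by rw [ha_def]; ring
  rw [ge_iff_le, h2a]
  have hfin : 1 / (2 * a) * (Real.log (K / S) +
      Real.log ((1 - Real.exp (-R * Δt)) / (1 - Real.exp (-Y * Δt))))
      < 1 / (2 * a) * ((2 * (j:ℝ) - (i:ℝ)) * a) :=
    mul_lt_mul_of_pos_left hLdef (by positivity)
  have : 1 / (2 * a) * ((2 * (j:ℝ) - (i:ℝ)) * a) = (j:ℝ) - (i:ℝ)/2 := by
    field_simp
  linarith [hfin, this ▸ hfin]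
end

section
/- If z > 0 satisfies z - K ≥ s0·(z/u - K) + s1·(u·z - K), where s0 = m(1-p), s1 = mp, m = e^{-RΔt}, p = (e^{(R-Y)Δt} - 1/u)/(u - 1/u), then z ≥ K·(1 - e^{-RΔt})/(1 - e^{-YΔt}). -/
/-- If `z > 0` satisfies `z - K ≥ s0·(z/u - K) + s1·(u·z - K)`, then
`z ≥ K·(1 - e^{-RΔt})/(1 - e^{-YΔt})`. -/
theorem stmt_5 (u R Y Δt K : ℝ)
    (hu : 1 < u) (hR : 0 < R) (hY : 0 < Y) (hΔt : 0 < Δt) (hK : 0 < K)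
    (m p s0 s1 : ℝ)
    (hm : m = Real.exp (-R * Δt))
    (hp : p = (Real.exp ((R - Y) * Δt) - 1 / u) / (u - 1 / u))
    (hs0 : s0 = m * (1 - p)) (hs1 : s1 = m * p)
    (z : ℝ) (hz : 0 < z)
    (hineq : z - K ≥ s0 * (z / u - K) + s1 * (u * z - K)) :
    z ≥ K * (1 - Real.exp (-R * Δt)) / (1 - Real.exp (-Y * Δt)) := by
  have hu0 : (0:ℝ) < u := lt_trans one_pos hu
  have hdpos : 0 < u - 1/u := by
    have : 1/u < 1 := by rw [div_lt_one hu0]; linarith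
    linarith
  have hpe : p * (u - 1/u) = Real.exp ((R-Y)*Δt) - 1/u := by
    rw [hp, div_mul_cancel₀ _ hdpos.ne']
  have hmul : Real.exp (-R*Δt) * Real.exp ((R-Y)*Δt) = Real.exp (-Y*Δt) := by
    rw [← Real.exp_add]; ring_nf
  have hkey : s0 * (z/u) + s1 * (u*z) = Real.exp (-Y*Δt) * z := by
    have h1 : s0 * (z/u) + s1 * (u*z) = m * z * (1/u + p * (u - 1/u)) := by
      rw [hs0, hs1]; field_simp; ring
    rw [h1, hpe, hm]
    have : Real.exp ((R-Y)*Δt) - 1/u + 1/u = Real.exp ((R-Y)*Δt) := by ring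
    nlinarith [hmul]
  have hEY : Real.exp (-Y*Δt) < 1 := by
    rw [Real.exp_lt_one_iff]; nlinarith
  have hER : Real.exp (-R*Δt) < 1 := by
    rw [Real.exp_lt_one_iff]; nlinarith
  have hineq2 : z * (1 - Real.exp (-Y*Δt)) ≥ K * (1 - Real.exp (-R*Δt)) := by
    have hsum : s0 + s1 = m := by rw [hs0, hs1]; ring
    have : z - K ≥ Real.exp (-Y*Δt) * z - m * K := by
      calc z - K ≥ s0 * (z / u - K) + s1 * (u * z - K) := hineq
        _ = (s0 * (z/u) + s1 * (u*z)) - (s0 + s1) * K := by ring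
        _ = Real.exp (-Y*Δt) * z - m * K := by rw [hkey, hsum]
    rw [hm] at this; nlinarith
  rw [ge_iff_le, div_le_iff₀ (by linarith)]
  linarith
end

section
/- In the American call binomial grid, the grid value is nonincreasing under two time steps diagonally: G_{i,j} ≥ G_{i+2,j+1} for all 0 ≤ i ≤ T-2 and 0 ≤ j < i. -/
/-- Diagonal two-step monotonicity of the American call binomial grid:
`G_{i,j} ≥ G_{i+2,j+1}` for `0 ≤ i ≤ T-2` and `0 ≤ j < i`. -/
theorem stmt_6 (S K u s0 s1 : ℝ) (T : ℕ)
    (hS : 0 < S) (hK : 0 < K) (hu : 1 < u) (hs0 : 0 ≤ s0) (hs1 : 0 ≤ s1)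
    (G : ℕ → ℤ → ℝ)
    (hGT : ∀ j : ℤ, G T j = max (S * u ^ (2 * j - (T : ℤ)) - K) 0)
    (hGrec : ∀ (i : ℕ) (j : ℤ), i < T →
      G i j = max (s0 * G (i + 1) j + s1 * G (i + 1) (j + 1))
                  (S * u ^ (2 * j - (i : ℤ)) - K))
    (i : ℕ) (j : ℤ) (hi : i + 2 ≤ T) (hj0 : 0 ≤ j) (hji : j < (i : ℤ)) :
    G i j ≥ G (i + 2) (j + 1) := by
  -- Nonnegativity of the grid.
  have hnonneg : ∀ k i, i + k = T → ∀ j, 0 ≤ G i j := by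
    intro k
    induction k with
    | zero =>
      intro i h j
      simp only [Nat.add_zero] at h
      subst h
      rw [hGT]
      exact le_max_right _ _
    | succ k ih =>
      intro i h j
      rw [hGrec i j (by omega)]
      exact le_max_of_le_left
        (add_nonneg (mul_nonneg hs0 (ih (i + 1) (by omega) j))
          (mul_nonneg hs1 (ih (i + 1) (by omega) (j + 1))))
  -- Main claim by backward induction.
  have main : ∀ k i, i + 2 + k = T → ∀ j : ℤ, G (i + 2) (j + 1) ≤ G i j := by
    intro k
    induction k with
    | zero =>
      intro i h j
      have hT2 : i + 2 = T := by omega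
      have hTz : (T : ℤ) = (i : ℤ) + 2 := by exact_mod_cast hT2.symm
      rw [hT2, hGT (j + 1), hGrec i j (by omega)]
      have he : 2 * (j + 1) - (T : ℤ) = 2 * j - (i : ℤ) := by omega
      rw [he]
      exact max_le (le_max_right _ _)
        (le_max_of_le_left
          (add_nonneg (mul_nonneg hs0 (hnonneg (T - (i + 1)) (i + 1) (by omega) j))
            (mul_nonneg hs1 (hnonneg (T - (i + 1)) (i + 1) (by omega) (j + 1)))))
    | succ k ih =>
      intro i h j
      rw [hGrec (i + 2) (j + 1) (by omega), hGrec i j (by omega)]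
      have he : 2 * (j + 1) - ((i + 2 : ℕ) : ℤ) = 2 * j - (i : ℤ) := by
        push_cast; ring
      rw [he]
      have h1 : G (i + 2 + 1) (j + 1) ≤ G (i + 1) j := ih (i + 1) (by omega) j
      have h2 : G (i + 2 + 1) (j + 1 + 1) ≤ G (i + 1) (j + 1) := ih (i + 1) (by omega) (j + 1)
      exact max_le_max
        (add_le_add (mul_le_mul_of_nonneg_left h1 hs0)
          (mul_le_mul_of_nonneg_left h2 hs1)) le_rfl
  exact main (T - (i + 2)) i (by omega) j
end

section
/- In the American call binomial grid, if cell (i+1, j+1) is red then cell (i,j) is red, i.e., G_{i+1,j+1} = G^{red}_{i+1,j+1} implies G_{i,j} = G^{red}_{i,j}. -/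
set_option maxHeartbeats 1000000 in
/-- Diagonally-left-of-red-is-red: in the American call binomial grid, if cell
`(i+1,j+1)` is red then cell `(i,j)` is red.  We use as hypotheses the
below-green-implies-green lemma and the diagonal monotonicity `G_{i,j} ≥ G_{i+2,j+1}`,
together with `Ggreen_{i+2,j+1} = Ggreen_{i,j}`. -/
theorem stmt_7 (S K u s0 s1 : ℝ) (T : ℕ)
    (hS : 0 < S) (hK : 0 < K) (hu : 1 < u) (hs0 : 0 ≤ s0) (hs1 : 0 ≤ s1)
    (G Gred Ggreen : ℕ → ℤ → ℝ)
    (hGgreen : ∀ (i : ℕ) (j : ℤ), Ggreen i j = S * u ^ (2 * j - (i : ℤ)) - K)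
    (hGredT : ∀ j : ℤ, Gred T j = 0)
    (hGred : ∀ (i : ℕ) (j : ℤ), i < T → Gred i j = s0 * G (i + 1) j + s1 * G (i + 1) (j + 1))
    (hG : ∀ (i : ℕ) (j : ℤ), G i j = max (Gred i j) (Ggreen i j))
    -- hypothesis (a): below-green-implies-green
    (hBelowGreen : ∀ (i : ℕ) (j : ℤ), i + 1 ≤ T → 0 ≤ j → j ≤ (i : ℤ) →
      G (i + 1) j = Ggreen (i + 1) j → G i j = Ggreen i j)
    -- hypothesis (b): diagonal monotonicity
    (hDiag : ∀ (i : ℕ) (j : ℤ), i + 2 ≤ T → 0 ≤ j → j < (i : ℤ) →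
      G i j ≥ G (i + 2) (j + 1))
    (i : ℕ) (j : ℤ) (hi : i + 1 ≤ T) (hj0 : 0 ≤ j) (hji : j ≤ (i : ℤ) - 1)
    (hred : G (i + 1) (j + 1) = Gred (i + 1) (j + 1)) :
    G i j = Gred i j := by
  have hu0 : (0:ℝ) < u := lt_trans one_pos hu
  have hune : u ≠ 0 := ne_of_gt hu0
  have hGge : ∀ (a : ℕ) (b : ℤ), Ggreen a b ≤ G a b := fun a b => by
    rw [hG]; exact le_max_right _ _
  have hGgr : ∀ (a : ℕ) (b : ℤ), Gred a b ≤ G a b := fun a b => by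
    rw [hG]; exact le_max_left _ _
  obtain ⟨y, hy_def⟩ : ∃ y : ℝ, y = S * u ^ (2*j - (i:ℤ) - 1) := ⟨_, rfl⟩
  have hy : 0 < y := by rw [hy_def]; exact mul_pos hS (zpow_pos hu0 _)
  have green_eq : ∀ (i' : ℕ) (j' : ℤ) (k : ℕ),
      2*j' - (i':ℤ) = 2*j - (i:ℤ) - 1 + k → Ggreen i' j' = y * u ^ k - K := by
    intro i' j' k hk
    rw [hGgreen, hk, zpow_add₀ hune, zpow_natCast, hy_def]; ring
  have g0 : Ggreen i j = y * u ^ 1 - K := green_eq i j 1 (by push_cast; ring)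
  have gm : Ggreen (i+1) j = y * u ^ 0 - K := green_eq (i+1) j 0 (by push_cast; ring)
  have gp1 : Ggreen (i+2) (j+1) = y * u ^ 1 - K := green_eq (i+2) (j+1) 1 (by push_cast; ring)
  have g1 : Ggreen (i+1) (j+1) = y * u ^ 2 - K := green_eq (i+1) (j+1) 2 (by push_cast; ring)
  have g2 : Ggreen i (j+1) = y * u ^ 3 - K := green_eq i (j+1) 3 (by push_cast; ring)
  have g2' : Ggreen (i+2) (j+2) = y * u ^ 3 - K := green_eq (i+2) (j+2) 3 (by push_cast; ring)
  have g3 : Ggreen (i+1) (j+2) = y * u ^ 4 - K := green_eq (i+1) (j+2) 4 (by push_cast; ring)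
  have g_e2 : Ggreen (i+3) (j+2) = y * u ^ 2 - K := green_eq (i+3) (j+2) 2 (by push_cast; ring)
  rcases le_or_gt (Ggreen i j) (Gred i j) with hge | hlt
  · rw [hG i j]; exact max_eq_left hge
  exfalso
  have hGij : G i j = Ggreen i j := by rw [hG i j]; exact max_eq_right hlt.le
  rcases eq_or_lt_of_le hi with hT | hT2
  · -- case i + 1 = T
    subst hT
    have hA1 : G (i+1) (j+1) = 0 := by rw [hred, hGredT]
    have hA2 : Ggreen (i+1) (j+1) ≤ 0 := by
      have h := hGge (i+1) (j+1); rw [hA1] at h; exact h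
    have hA3 : 0 ≤ G (i+1) j := by
      have h := hGgr (i+1) j; rw [hGredT] at h; exact h
    have hA5 : 0 ≤ Gred i j := by
      rw [hGred i j (by omega), hA1, mul_zero, add_zero]
      exact mul_nonneg hs0 hA3
    rw [g0] at hlt; rw [g1] at hA2
    nlinarith [hlt, hA2, hA5, mul_pos (mul_pos hy hu0) (sub_pos.mpr hu)]
  · -- case i + 2 ≤ T
    have hd0 : G i j ≥ G (i+2) (j+1) := hDiag i j (by omega) hj0 (by omega)
    have pin1 : G (i+2) (j+1) = Ggreen (i+2) (j+1) := by
      refine le_antisymm ?_ (hGge _ _)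
      rw [hGij, g0] at hd0; rw [gp1]; exact hd0
    have pin2 : G (i+1) (j+1) = Ggreen (i+1) (j+1) :=
      hBelowGreen (i+1) (j+1) (by omega) (by omega) (by omega) pin1
    have pin3 : G i (j+1) = Ggreen i (j+1) :=
      hBelowGreen i (j+1) hi (by omega) (by omega) pin2
    have pin4 : G (i+2) (j+2) = Ggreen (i+2) (j+2) := by
      rcases eq_or_lt_of_le (show i+2 ≤ T from hT2) with hT3 | hT4
      · -- i + 2 = T
        subst hT3
        have hB : 0 ≤ Ggreen (i+2) (j+1) := by
          have h := hG (i+2) (j+1)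
          rw [pin1, hGredT] at h
          calc (0:ℝ) ≤ max 0 (Ggreen (i+2) (j+1)) := le_max_left _ _
            _ = Ggreen (i+2) (j+1) := h.symm
        have hg0 : 0 ≤ Ggreen (i+2) (j+2) := by
          rw [gp1] at hB; rw [g2']
          nlinarith [hB, mul_nonneg (mul_nonneg hy.le hu0.le)
            (by nlinarith : (0:ℝ) ≤ u^2 - 1)]
        rw [hG, hGredT]; exact max_eq_right hg0
      · -- i + 3 ≤ T
        by_contra hne
        have hd := hDiag (i+1) (j+1) (by omega) (by omega) (by omega)
        rw [show (j+1)+1 = j + 2 from by ring] at hd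
        have pin5 : G (i+3) (j+2) = Ggreen (i+3) (j+2) := by
          refine le_antisymm ?_ (hGge _ _)
          rw [g_e2]
          calc G (i+3) (j+2) ≤ G (i+1) (j+1) := hd
            _ = y * u ^ 2 - K := by rw [pin2, g1]
        exact hne (hBelowGreen (i+2) (j+2) (by omega) (by omega) (by omega) pin5)
    -- value lemmas
    have v1 : G (i+2) (j+1) = y * u ^ 1 - K := by rw [pin1, gp1]
    have v2 : G (i+1) (j+1) = y * u ^ 2 - K := by rw [pin2, g1]
    have v3 : G i (j+1) = y * u ^ 3 - K := by rw [pin3, g2]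
    have v4 : G (i+2) (j+2) = y * u ^ 3 - K := by rw [pin4, g2']
    have b1 : y * u ^ 0 - K ≤ G (i+1) j := by rw [← gm]; exact hGge _ _
    have b3 : y * u ^ 4 - K ≤ G (i+1) (j+2) := by rw [← g3]; exact hGge _ _
    -- E1 : equality at (i+1, j+1)
    have hredEq : Gred (i+1) (j+1) = y * u ^ 2 - K := by rw [← hred, v2]
    have hexp : Gred (i+1) (j+1) = s0 * G (i+2) (j+1) + s1 * G (i+2) (j+2) := by
      have h := hGred (i+1) (j+1) (by omega)
      rw [show (j+1)+1 = j + 2 from by ring] at h; exact h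
    rw [v1, v4] at hexp
    have E1 : s0 * (y * u ^ 1 - K) + s1 * (y * u ^ 3 - K) = y * u ^ 2 - K := by
      rw [← hexp, hredEq]
    -- E2 : at (i, j+1)
    have hgred2 := hGred i (j+1) (by omega)
    rw [show (j+1)+1 = j + 2 from by ring, v2] at hgred2
    have E2 : s0 * (y * u ^ 2 - K) + s1 * (y * u ^ 4 - K) ≤ y * u ^ 3 - K := by
      have h1 : Gred i (j+1) ≤ y * u ^ 3 - K := by rw [← v3]; exact hGgr _ _
      have h2 : s1 * (y * u ^ 4 - K) ≤ s1 * G (i+1) (j+2) :=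
        mul_le_mul_of_nonneg_left b3 hs1
      linarith [hgred2, h1, h2]
    -- E3 : strict inequality at (i, j)
    have hgred0 := hGred i j (by omega)
    rw [v2] at hgred0
    have E3 : s0 * (y * u ^ 0 - K) + s1 * (y * u ^ 2 - K) < y * u ^ 1 - K := by
      have h2 : s0 * (y * u ^ 0 - K) ≤ s0 * G (i+1) j :=
        mul_le_mul_of_nonneg_left b1 hs0
      have h3 : Gred i j < y * u ^ 1 - K := by rw [← g0]; exact hlt
      linarith [hgred0, h2, h3]
    -- combine
    have E1u : u * (s0 * (y * u ^ 1 - K) + s1 * (y * u ^ 3 - K)) = u * (y * u ^ 2 - K) := by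
      rw [E1]
    have E3u : u * (s0 * (y * u ^ 0 - K) + s1 * (y * u ^ 2 - K)) < u * (y * u ^ 1 - K) :=
      (mul_lt_mul_iff_right₀ hu0).mpr E3
    have F1 : s0*(K*u-K) + s1*(K*u-K) ≤ K*u - K := by nlinarith [E2, E1u]
    have F2 : K*u - K < s0*(K*u-K) + s1*(K*u-K) := by nlinarith [E1, E3u]
    linarith
end
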